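/- Let A be a nondeterministic coBüchi automaton such that Eve wins G₂(A), and let A' be the G₂-restriction of A, i.e., the automaton obtained by restricting A to the set Q' of states q such that Eve wins G₂(A^q), where A^q is A with initial state changed to q. Then: (i) Eve wins G₂(A'^{q'}) for every state q' of A', and (ii) if A' is GFG then A is GFG. -/

import Mathlib

set_option autoImplicit false
set_option linter.unusedVariables false

/-! ### Positive Boolean formulas -/

inductive PosBool (Q : Type) : Type
  | atom : Q → PosBool Q
  | and : PosBool Q → PosBool Q → PosBool Q
  | or : PosBool Q → PosBool Q → PosBool Q

namespace PosBool

variable {Q : Type}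

/-- The possible outcomes of Eve resolving all the disjunctions of a positive
Boolean formula: each element of `eveRes φ` is the set of atoms that Adam can
reach (by resolving the conjunctions) against that fixed resolution of Eve.
These are exactly the `q`-boxes of the one-step game over the formula `φ`. -/
def eveRes : PosBool Q → Set (Set Q)
  | atom q => {{q}}
  | and f g => {s | ∃ u ∈ eveRes f, ∃ v ∈ eveRes g, s = u ∪ v}
  | or f g => eveRes f ∪ eveRes g

/-- The dual formula: swap disjunctions and conjunctions. -/
def dual : PosBool Q → PosBool Q
  | atom q => atom q
  | and f g => or (dual f) (dual g)
  | or f g => and (dual f) (dual g)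

/-- Length (number of nodes) of a formula. -/
def size : PosBool Q → ℕ
  | atom _ => 1
  | and f g => size f + size g + 1
  | or f g => size f + size g + 1

/-- Atoms occurring in a formula. -/
def atoms : PosBool Q → Set Q
  | atom q => {q}
  | and f g => atoms f ∪ atoms g
  | or f g => atoms f ∪ atoms g

/-- A purely conjunctive formula (no disjunctions). -/
def NoOr : PosBool Q → Prop
  | atom _ => True
  | and f g => NoOr f ∧ NoOr g
  | or _ _ => False

/-- A purely disjunctive formula (no conjunctions). -/
def NoAnd : PosBool Q → Prop
  | atom _ => True
  | and _ _ => False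
  | or f g => NoAnd f ∧ NoAnd g

/-- Disjunctive normal form: a disjunction of conjunctions. -/
def IsDNF : PosBool Q → Prop
  | or f g => IsDNF f ∧ IsDNF g
  | φ => NoOr φ

end PosBool

/-! ### Acceptance conditions -/

/-- `c` appears infinitely often in `f`. -/
def InfOften (f : ℕ → ℕ) (c : ℕ) : Prop := ∀ n, ∃ m, n ≤ m ∧ f m = c

/-- The parity condition: the highest value appearing infinitely often is even. -/
def ParityAccept (f : ℕ → ℕ) : Prop :=
  ∃ c, Even c ∧ InfOften f c ∧ ∀ d, InfOften f d → d ≤ c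

/-- The sequence `ρ` visits the set `S` infinitely often. -/
def InfOftenIn {T : Type} (ρ : ℕ → T) (S : Set T) : Prop := ∀ n, ∃ m, n ≤ m ∧ ρ m ∈ S

/-- A Rabin (or Streett) pair of sets of transitions. -/
structure RabinPair (T : Type) where
  bad : Set T
  good : Set T

/-- The Rabin condition for pairs `⟨B_i, G_i⟩`, `i < k`: for some `i`,
`inf(ρ) ∩ B_i = ∅` and `inf(ρ) ∩ G_i ≠ ∅`. -/
def RabinAccept {T : Type} {k : ℕ} (pairs : Fin k → RabinPair T) (ρ : ℕ → T) : Prop :=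
  ∃ i, ¬ InfOftenIn ρ (pairs i).bad ∧ InfOftenIn ρ (pairs i).good

/-- The Streett condition for pairs `⟨B_i, G_i⟩`, `i < k`: for every `i`,
`inf(ρ) ∩ B_i = ∅` or `inf(ρ) ∩ G_i ≠ ∅`. -/
def StreettAccept {T : Type} {k : ℕ} (pairs : Fin k → RabinPair T) (ρ : ℕ → T) : Prop :=
  ∀ i, ¬ InfOftenIn ρ (pairs i).bad ∨ InfOftenIn ρ (pairs i).good

/-! ### Generic two-player games of infinite duration.

A game proceeds in rounds; in each round, from the current game state, up to
six moves are played in alternation: Adam moves first (`a1`), then Eve (`e1`),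
then Adam (`a2`), then Eve (`e2`), then Adam (`a3`), then Eve (`e3`).
(Unused phases are modelled by the type `Unit`.)  Strategies may use the full
history of the play (the list of previous complete rounds) as well as the moves
already played in the current round.  Eve wins an infinite play iff the
sequence of rounds satisfies the winning condition `win`. -/

structure GameRound (St α1 β1 α2 β2 α3 β3 : Type) where
  st : St
  a1 : α1
  e1 : β1
  a2 : α2
  e2 : β2
  a3 : α3
  e3 : β3

structure Game (St α1 β1 α2 β2 α3 β3 : Type) where
  init : St
  A1 : St → Set α1
  E1 : St → α1 → Set β1
  A2 : St → α1 → β1 → Set α2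
  E2 : St → α1 → β1 → α2 → Set β2
  A3 : St → α1 → β1 → α2 → β2 → Set α3
  E3 : St → α1 → β1 → α2 → β2 → α3 → Set β3
  next : St → α1 → β1 → α2 → β2 → α3 → β3 → St
  win : (ℕ → GameRound St α1 β1 α2 β2 α3 β3) → Prop

namespace Game

variable {St α1 β1 α2 β2 α3 β3 : Type}

/-- The states along the play are correctly updated. -/
def StateOk (G : Game St α1 β1 α2 β2 α3 β3) (ρ : ℕ → GameRound St α1 β1 α2 β2 α3 β3) : Prop :=
  (ρ 0).st = G.init ∧
  ∀ n, (ρ (n+1)).st = G.next (ρ n).st (ρ n).a1 (ρ n).e1 (ρ n).a2 (ρ n).e2 (ρ n).a3 (ρ n).e3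

/-- Round `n` of the play is entirely legal. -/
def RoundLegal (G : Game St α1 β1 α2 β2 α3 β3) (ρ : ℕ → GameRound St α1 β1 α2 β2 α3 β3)
    (n : ℕ) : Prop :=
  (ρ n).a1 ∈ G.A1 (ρ n).st ∧
  (ρ n).e1 ∈ G.E1 (ρ n).st (ρ n).a1 ∧
  (ρ n).a2 ∈ G.A2 (ρ n).st (ρ n).a1 (ρ n).e1 ∧
  (ρ n).e2 ∈ G.E2 (ρ n).st (ρ n).a1 (ρ n).e1 (ρ n).a2 ∧
  (ρ n).a3 ∈ G.A3 (ρ n).st (ρ n).a1 (ρ n).e1 (ρ n).a2 (ρ n).e2 ∧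
  (ρ n).e3 ∈ G.E3 (ρ n).st (ρ n).a1 (ρ n).e1 (ρ n).a2 (ρ n).e2 (ρ n).a3

/-- All rounds before round `n` are entirely legal. -/
def Hleg (G : Game St α1 β1 α2 β2 α3 β3) (ρ : ℕ → GameRound St α1 β1 α2 β2 α3 β3)
    (n : ℕ) : Prop :=
  ∀ m, m < n → RoundLegal G ρ m

/-- Eve wins the play `ρ`: she is never the first player to make an illegal
move (the moves of each round are ordered `a1, e1, a2, e2, a3, e3`), and if all
moves are legal then the play satisfies the winning condition. -/
def EveWinsPlay (G : Game St α1 β1 α2 β2 α3 β3)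
    (ρ : ℕ → GameRound St α1 β1 α2 β2 α3 β3) : Prop :=
  (∀ n, Hleg G ρ n → (ρ n).a1 ∈ G.A1 (ρ n).st →
      (ρ n).e1 ∈ G.E1 (ρ n).st (ρ n).a1) ∧
  (∀ n, Hleg G ρ n → (ρ n).a1 ∈ G.A1 (ρ n).st →
      (ρ n).e1 ∈ G.E1 (ρ n).st (ρ n).a1 →
      (ρ n).a2 ∈ G.A2 (ρ n).st (ρ n).a1 (ρ n).e1 →
      (ρ n).e2 ∈ G.E2 (ρ n).st (ρ n).a1 (ρ n).e1 (ρ n).a2) ∧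
  (∀ n, Hleg G ρ n → (ρ n).a1 ∈ G.A1 (ρ n).st →
      (ρ n).e1 ∈ G.E1 (ρ n).st (ρ n).a1 →
      (ρ n).a2 ∈ G.A2 (ρ n).st (ρ n).a1 (ρ n).e1 →
      (ρ n).e2 ∈ G.E2 (ρ n).st (ρ n).a1 (ρ n).e1 (ρ n).a2 →
      (ρ n).a3 ∈ G.A3 (ρ n).st (ρ n).a1 (ρ n).e1 (ρ n).a2 (ρ n).e2 →
      (ρ n).e3 ∈ G.E3 (ρ n).st (ρ n).a1 (ρ n).e1 (ρ n).a2 (ρ n).e2 (ρ n).a3) ∧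
  ((∀ n, RoundLegal G ρ n) → G.win ρ)

/-- Adam wins the play `ρ`: he is never the first player to make an illegal
move, and if all moves are legal then the play violates the (Eve) winning
condition. -/
def AdamWinsPlay (G : Game St α1 β1 α2 β2 α3 β3)
    (ρ : ℕ → GameRound St α1 β1 α2 β2 α3 β3) : Prop :=
  (∀ n, Hleg G ρ n → (ρ n).a1 ∈ G.A1 (ρ n).st) ∧
  (∀ n, Hleg G ρ n → (ρ n).a1 ∈ G.A1 (ρ n).st →
      (ρ n).e1 ∈ G.E1 (ρ n).st (ρ n).a1 →
      (ρ n).a2 ∈ G.A2 (ρ n).st (ρ n).a1 (ρ n).e1) ∧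
  (∀ n, Hleg G ρ n → (ρ n).a1 ∈ G.A1 (ρ n).st →
      (ρ n).e1 ∈ G.E1 (ρ n).st (ρ n).a1 →
      (ρ n).a2 ∈ G.A2 (ρ n).st (ρ n).a1 (ρ n).e1 →
      (ρ n).e2 ∈ G.E2 (ρ n).st (ρ n).a1 (ρ n).e1 (ρ n).a2 →
      (ρ n).a3 ∈ G.A3 (ρ n).st (ρ n).a1 (ρ n).e1 (ρ n).a2 (ρ n).e2) ∧
  ((∀ n, RoundLegal G ρ n) → ¬ G.win ρ)

/-- The history of a play before round `n`: the list of the first `n` rounds. -/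
def hist (ρ : ℕ → GameRound St α1 β1 α2 β2 α3 β3) (n : ℕ) : List (GameRound St α1 β1 α2 β2 α3 β3) :=
  (List.range n).map ρ

/-- A strategy of Eve: for each of her three moves in a round, a choice
depending on the history, the current state, and the moves already played
in the current round. -/
structure EStrat (St α1 β1 α2 β2 α3 β3 : Type) where
  f1 : List (GameRound St α1 β1 α2 β2 α3 β3) → St → α1 → β1
  f2 : List (GameRound St α1 β1 α2 β2 α3 β3) → St → α1 → β1 → α2 → β2
  f3 : List (GameRound St α1 β1 α2 β2 α3 β3) → St → α1 → β1 → α2 → β2 → α3 → β3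

/-- A strategy of Adam. -/
structure AStrat (St α1 β1 α2 β2 α3 β3 : Type) where
  g1 : List (GameRound St α1 β1 α2 β2 α3 β3) → St → α1
  g2 : List (GameRound St α1 β1 α2 β2 α3 β3) → St → α1 → β1 → α2
  g3 : List (GameRound St α1 β1 α2 β2 α3 β3) → St → α1 → β1 → α2 → β2 → α3

/-- The play `ρ` is consistent with the strategy `σ` of Eve. -/
def ConsE (σ : EStrat St α1 β1 α2 β2 α3 β3) (ρ : ℕ → GameRound St α1 β1 α2 β2 α3 β3) : Prop :=
  ∀ n, (ρ n).e1 = σ.f1 (hist ρ n) (ρ n).st (ρ n).a1 ∧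
       (ρ n).e2 = σ.f2 (hist ρ n) (ρ n).st (ρ n).a1 (ρ n).e1 (ρ n).a2 ∧
       (ρ n).e3 = σ.f3 (hist ρ n) (ρ n).st (ρ n).a1 (ρ n).e1 (ρ n).a2 (ρ n).e2 (ρ n).a3

/-- The play `ρ` is consistent with the strategy `τ` of Adam. -/
def ConsA (τ : AStrat St α1 β1 α2 β2 α3 β3) (ρ : ℕ → GameRound St α1 β1 α2 β2 α3 β3) : Prop :=
  ∀ n, (ρ n).a1 = τ.g1 (hist ρ n) (ρ n).st ∧
       (ρ n).a2 = τ.g2 (hist ρ n) (ρ n).st (ρ n).a1 (ρ n).e1 ∧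
       (ρ n).a3 = τ.g3 (hist ρ n) (ρ n).st (ρ n).a1 (ρ n).e1 (ρ n).a2 (ρ n).e2

/-- `σ` is a winning strategy for Eve: every play consistent with `σ` is won
by Eve. -/
def EveWinningStrat (G : Game St α1 β1 α2 β2 α3 β3) (σ : EStrat St α1 β1 α2 β2 α3 β3) : Prop :=
  ∀ ρ, StateOk G ρ → ConsE σ ρ → EveWinsPlay G ρ

/-- Eve wins the game `G`. -/
def EveWins (G : Game St α1 β1 α2 β2 α3 β3) : Prop := ∃ σ, EveWinningStrat G σ

/-- `τ` is a winning strategy for Adam: every play consistent with `τ` is won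
by Adam. -/
def AdamWinningStrat (G : Game St α1 β1 α2 β2 α3 β3) (τ : AStrat St α1 β1 α2 β2 α3 β3) : Prop :=
  ∀ ρ, StateOk G ρ → ConsA τ ρ → AdamWinsPlay G ρ

/-- Adam wins the game `G`. -/
def AdamWins (G : Game St α1 β1 α2 β2 α3 β3) : Prop := ∃ τ, AdamWinningStrat G τ

end Game

/-! ### Nondeterministic coBüchi automata -/

/-- A nondeterministic coBüchi automaton: `acc q a q'` holds iff the transition
`(q, a, q')` is accepting; a run is accepting iff it eventually takes only
accepting transitions. -/
structure NCW (A : Type) where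
  Q : Type
  init : Q
  delta : Q → A → Set Q
  acc : Q → A → Q → Prop

namespace NCW

variable {A : Type}

/-- `r` is a run of `C` on `w` from the state `q₀`. -/
def RunOn (C : NCW A) (q₀ : C.Q) (w : ℕ → A) (r : ℕ → C.Q) : Prop :=
  r 0 = q₀ ∧ ∀ n, r (n+1) ∈ C.delta (r n) (w n)

/-- The run `r` on `w` is accepting: eventually only accepting transitions. -/
def AccRun (C : NCW A) (w : ℕ → A) (r : ℕ → C.Q) : Prop :=
  ∃ N, ∀ n, N ≤ n → C.acc (r n) (w n) (r (n+1))

/-- The language of `C` from the state `q₀`. -/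
def LangFrom (C : NCW A) (q₀ : C.Q) : Set (ℕ → A) :=
  {w | ∃ r, C.RunOn q₀ w r ∧ C.AccRun w r}

/-- The language of `C`. -/
def Lang (C : NCW A) : Set (ℕ → A) := C.LangFrom C.init

/-- The letter game on `C`: Adam picks letters, Eve picks transitions; Eve wins
iff the word played is not in `L(C)` or her run is accepting. -/
def letterGame (C : NCW A) : Game C.Q A C.Q Unit Unit Unit Unit where
  init := C.init
  A1 _ := Set.univ
  E1 q a := C.delta q a
  A2 _ _ _ := Set.univ
  E2 _ _ _ _ := Set.univ
  A3 _ _ _ _ _ := Set.univ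
  E3 _ _ _ _ _ _ := Set.univ
  next _ _ q' _ _ _ _ := q'
  win ρ := (fun n => (ρ n).a1) ∉ C.Lang ∨
           ∃ N, ∀ n, N ≤ n → C.acc (ρ n).st (ρ n).a1 (ρ n).e1

/-- `C` is good-for-games. -/
def GFG (C : NCW A) : Prop := Game.EveWins C.letterGame

/-- The two-token game on `C` from the configuration `(p, q₁, q₂)`: Adam picks
a letter, Eve picks a transition for her token, Adam picks transitions for his
two tokens; Eve wins iff her run is accepting or both of Adam's runs are
rejecting. -/
def G2From (C : NCW A) (p q₁ q₂ : C.Q) :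
    Game (C.Q × C.Q × C.Q) A C.Q (C.Q × C.Q) Unit Unit Unit where
  init := (p, q₁, q₂)
  A1 _ := Set.univ
  E1 c a := C.delta c.1 a
  A2 c a _ := {m | m.1 ∈ C.delta c.2.1 a ∧ m.2 ∈ C.delta c.2.2 a}
  E2 _ _ _ _ := Set.univ
  A3 _ _ _ _ _ := Set.univ
  E3 _ _ _ _ _ _ := Set.univ
  next _ _ q' m _ _ _ := (q', m.1, m.2)
  win ρ :=
    (∃ N, ∀ n, N ≤ n → C.acc (ρ n).st.1 (ρ n).a1 (ρ n).e1) ∨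
    ((¬ ∃ N, ∀ n, N ≤ n → C.acc (ρ n).st.2.1 (ρ n).a1 (ρ n).a2.1) ∧
     (¬ ∃ N, ∀ n, N ≤ n → C.acc (ρ n).st.2.2 (ρ n).a1 (ρ n).a2.2))

/-- The two-token game `G₂(C)` (from the initial state). -/
def G2 (C : NCW A) : Game (C.Q × C.Q × C.Q) A C.Q (C.Q × C.Q) Unit Unit Unit :=
  C.G2From C.init C.init C.init

end NCW

/-! ### Statement 19

Let `A` be a nondeterministic coBüchi automaton such that Eve wins `G₂(A)`,
and let `A'` be the `G₂`-restriction of `A`, obtained by restricting `A` to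
the states `q` such that Eve wins `G₂(A^q)`.  Then (i) Eve wins `G₂(A'^{q'})`
for every state `q'` of `A'`, and (ii) if `A'` is GFG then `A` is GFG. -/

/-- The `G₂`-restriction of `C`: restrict to those states `q` from which Eve
wins the two-token game started with all three tokens on `q`. -/
def NCW.restrict {A : Type} (C : NCW A) (h : Game.EveWins (C.G2From C.init C.init C.init)) :
    NCW A where
  Q := {q : C.Q // Game.EveWins (C.G2From q q q)}
  init := ⟨C.init, h⟩
  delta q a := {q' | q'.val ∈ C.delta q.val a}
  acc q a q' := C.acc q.val a q'.val


/-!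
Eve's strategies are handled as causal maps (`NCW.TokenStrategy`) from the word and Adam's token
runs to her run. Composing a winning two-token strategy at `q` with itself gives a four-token one;
feeding two of its tokens with Eve's own run leaves a strategy against two carrier tokens whose run
stays in the winning region `Q'` as long as the carriers visit immortal states, i.e. states from
which a run can be chosen causally: at each time, the rest of the strategy then beats two copies of
Eve's own run once the carriers are replaced by such runs.

For (i), Adam's tokens in `A'` visit states of `Q'`, which are immortal. For (ii), it suffices that
`L(A) ⊆ L(A')`, since a GFG strategy of `A'` is then one of `A`. Iterating the response above from
an accepting run gives accepting runs `ρ₀, ρ₁, …` such that Eve wins `G₂` from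
`(ρₖ₊₁(n), ρₖ(n), ρₖ(n))`. These wins compose, so by pigeonhole some `ρⱼ(n)` with `j ≤ |Q|` wins
against two tokens from itself and is immortal, hence so is `ρ_|Q|(n)`, and `ρ_{|Q|+1}` runs
in `Q'`.
-/

theorem Game.hleg_succ {St α1 β1 α2 β2 α3 β3 : Type} {G : Game St α1 β1 α2 β2 α3 β3}
    {ρ : ℕ → GameRound St α1 β1 α2 β2 α3 β3} {n : ℕ} :
    G.Hleg ρ (n + 1) ↔ G.Hleg ρ n ∧ G.RoundLegal ρ n :=
  ⟨fun h => ⟨fun m hm => h m (by omega), h n n.lt_succ_self⟩,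
    fun h m hm => (Nat.lt_succ_iff_lt_or_eq.1 hm).elim (h.1 m) (· ▸ h.2)⟩

theorem Game.getD_map_hist {St α1 β1 α2 β2 α3 β3 X : Type}
    {ρ : ℕ → GameRound St α1 β1 α2 β2 α3 β3} (f : GameRound St α1 β1 α2 β2 α3 β3 → X) (d : X)
    {m n : ℕ} (h : m < n) : ((Game.hist ρ n).map f).getD m d = f (ρ m) := by
  simp [Game.hist, h]

theorem Game.getD_map_hist_self {St α1 β1 α2 β2 α3 β3 X : Type}
    {ρ : ℕ → GameRound St α1 β1 α2 β2 α3 β3} (f : GameRound St α1 β1 α2 β2 α3 β3 → X) (d : X)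
    (n : ℕ) : ((Game.hist ρ n).map f).getD n d = d := by
  simp [Game.hist]

namespace NCW

variable {A : Type}

def RunUpTo (D : NCW A) (q : D.Q) (w : ℕ → A) (r : ℕ → D.Q) (n : ℕ) : Prop :=
  r 0 = q ∧ ∀ m < n, r (m + 1) ∈ D.delta (r m) (w m)

section Runs

variable {D : NCW A} {q : D.Q} {w : ℕ → A} {r : ℕ → D.Q} {n : ℕ}

theorem RunUpTo.mono {m : ℕ} (h : D.RunUpTo q w r n) (hmn : m ≤ n) : D.RunUpTo q w r m :=
  ⟨h.1, fun k hk => h.2 k (lt_of_lt_of_le hk hmn)⟩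

theorem RunUpTo.succ (h : D.RunUpTo q w r n) (hn : r (n + 1) ∈ D.delta (r n) (w n)) :
    D.RunUpTo q w r (n + 1) :=
  ⟨h.1, fun m hm => (Nat.lt_succ_iff_lt_or_eq.1 hm).elim (h.2 m) (· ▸ hn)⟩

theorem RunOn.runUpTo (h : D.RunOn q w r) (n : ℕ) : D.RunUpTo q w r n :=
  ⟨h.1, fun m _ => h.2 m⟩

theorem runOn_of_forall_runUpTo (h : ∀ n, D.RunUpTo q w r n) : D.RunOn q w r :=
  ⟨(h 0).1, fun m => (h (m + 1)).2 m m.lt_succ_self⟩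

theorem accRun_shift (n : ℕ) :
    D.AccRun (fun t => w (n + t)) (fun t => r (n + t)) ↔ D.AccRun w r := by
  constructor
  · rintro ⟨N, hN⟩
    refine ⟨n + N, fun m hm => ?_⟩
    obtain ⟨t, rfl⟩ := Nat.exists_eq_add_of_le (le_of_add_le_left hm)
    exact hN t (by omega)
  · rintro ⟨N, hN⟩
    exact ⟨N, fun t ht => hN (n + t) (by omega)⟩

end Runs

def splice {X : Type} (n : ℕ) (f g : ℕ → X) (m : ℕ) : X :=
  if m < n then f m else g (m - n)

section Splice

variable {X : Type} {n : ℕ} {f g g' : ℕ → X}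

theorem splice_of_lt {m : ℕ} (h : m < n) : splice n f g m = f m := if_pos h

@[simp]
theorem splice_add (t : ℕ) : splice n f g (n + t) = g t := by
  simp [splice]

theorem splice_congr {t : ℕ} (h : ∀ m < t, g m = g' m) :
    ∀ m < n + t, splice n f g m = splice n f g' m := by
  intro m hm
  unfold splice
  split_ifs with hmn
  · rfl
  · exact h _ (by omega)

variable {D : NCW A} {q : D.Q} {w w' : ℕ → A} {r r' : ℕ → D.Q}

theorem runUpTo_splice {t : ℕ} (hr : D.RunUpTo q w r n) (hr' : D.RunUpTo (r n) w' r' t) :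
    D.RunUpTo q (splice n w w') (splice n r r') (n + t) := by
  refine ⟨?_, fun m hm => ?_⟩
  · rcases Nat.eq_zero_or_pos n with rfl | hn
    · simpa [splice] using hr'.1.trans hr.1
    · rw [splice_of_lt hn, hr.1]
  · unfold splice
    split_ifs with h1 h2 h2
    · exact hr.2 m h1
    · have hmn : m + 1 = n := by omega
      simpa [hmn, hr'.1] using hr.2 m (by omega)
    · omega
    · rw [show m + 1 - n = m - n + 1 by omega]
      exact hr'.2 (m - n) (by omega)

theorem runOn_splice (hr : D.RunUpTo q w r n) (hr' : D.RunOn (r n) w' r') :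
    D.RunOn q (splice n w w') (splice n r r') :=
  runOn_of_forall_runUpTo fun t => (runUpTo_splice hr (hr'.runUpTo t)).mono (by omega)

theorem accRun_splice : D.AccRun (splice n w w') (splice n r r') ↔ D.AccRun w' r' := by
  rw [← accRun_shift n]
  simp only [splice_add]

end Splice

/-- A strategy of Eve in the token game from `p` against Adam's tokens `i : ι`, started on `y i`,
given by her run as a function of the word and of the runs of Adam's tokens.  Her state at time `n`
may only depend on the letters and on the states of Adam's tokens before time `n`, and it needs to
be a legal move only as long as Adam's tokens move legally. -/
structure TokenStrategy (D : NCW A) {ι : Type} (p : D.Q) (y : ι → D.Q) where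
  run : (ℕ → A) → (ι → ℕ → D.Q) → ℕ → D.Q
  run_zero : ∀ w r, run w r 0 = p
  run_congr : ∀ n w w' r r', (∀ m < n, w m = w' m) → (∀ i, ∀ m < n, r i m = r' i m) →
    run w r n = run w' r' n
  run_mem : ∀ w r n, (∀ i, D.RunUpTo (y i) w (r i) n) →
    run w r (n + 1) ∈ D.delta (run w r n) (w n)
  wins : ∀ w r, (∀ i, D.RunOn (y i) w (r i)) →
    D.AccRun w (run w r) ∨ ∀ i, ¬ D.AccRun w (r i)

/-- A run from `q` can be chosen causally for every word. -/
def Immortal (D : NCW A) (q : D.Q) : Prop :=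
  Nonempty (TokenStrategy D q fun _ : Empty => q)

namespace TokenStrategy

section Operations

variable {D : NCW A} {ι κ : Type} {p : D.Q} {y : ι → D.Q} {w : ℕ → A} {r : ι → ℕ → D.Q}

theorem runUpTo_run (σ : TokenStrategy D p y) {n : ℕ} (hr : ∀ i, D.RunUpTo (y i) w (r i) n) :
    D.RunUpTo p w (σ.run w r) (n + 1) :=
  ⟨σ.run_zero w r, fun m hm => σ.run_mem w r m fun i => (hr i).mono (by omega)⟩

theorem runOn_run (σ : TokenStrategy D p y) (hr : ∀ i, D.RunOn (y i) w (r i)) :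
    D.RunOn p w (σ.run w r) :=
  runOn_of_forall_runUpTo fun n => (σ.runUpTo_run fun i => (hr i).runUpTo n).mono (by omega)

def residual (σ : TokenStrategy D p y) (w : ℕ → A) (r : ι → ℕ → D.Q) (n : ℕ)
    (hr : ∀ i, D.RunUpTo (y i) w (r i) n) : TokenStrategy D (σ.run w r n) fun i => r i n where
  run w' r' t := σ.run (splice n w w') (fun i => splice n (r i) (r' i)) (n + t)
  run_zero w' r' :=
    σ.run_congr n _ _ _ _ (fun _ hm => splice_of_lt hm) fun _ _ hm => splice_of_lt hm
  run_congr t w₁ w₂ r₁ r₂ hw hr' :=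
    σ.run_congr _ _ _ _ _ (splice_congr hw) fun i => splice_congr (hr' i)
  run_mem w' r' t hr' := by
    have := σ.run_mem (splice n w w') _ (n + t) fun i => runUpTo_splice (hr i) (hr' i)
    rwa [splice_add] at this
  wins w' r' hr' := by
    rcases σ.wins _ _ fun i => runOn_splice (hr i) (hr' i) with hacc | hrej
    · left
      simpa using (accRun_shift n).2 hacc
    · exact Or.inr fun i => accRun_splice.not.1 (hrej i)

def comp {z : ι → κ → D.Q} (σ : TokenStrategy D p y) (τ : ∀ i, TokenStrategy D (y i) (z i)) :
    TokenStrategy D p fun ik : ι × κ => z ik.1 ik.2 where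
  run w r := σ.run w fun i => (τ i).run w fun k => r (i, k)
  run_zero w r := σ.run_zero _ _
  run_congr n w w' r r' hw hr := σ.run_congr n _ _ _ _ hw fun i m hm =>
    (τ i).run_congr m _ _ _ _ (fun l hl => hw l (hl.trans hm)) fun k l hl =>
      hr (i, k) l (hl.trans hm)
  run_mem w r n hr := σ.run_mem _ _ n fun i =>
    ((τ i).runUpTo_run fun k => hr (i, k)).mono n.le_succ
  wins w r hr := by
    rcases σ.wins w _ fun i => (τ i).runOn_run fun k => hr (i, k) with hacc | hrej
    · exact Or.inl hacc
    · exact Or.inr fun ⟨i, k⟩ => ((τ i).wins w _ fun k => hr (i, k)).resolve_left (hrej i) k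

def comap {ι' : Type} {y' : ι' → D.Q} (σ : TokenStrategy D p y) (f : ι → ι')
    (hf : Function.Surjective f) (hy : ∀ i, y i = y' (f i)) : TokenStrategy D p y' where
  run w r := σ.run w fun i => r (f i)
  run_zero w r := σ.run_zero _ _
  run_congr n w w' r r' hw hr := σ.run_congr n _ _ _ _ hw fun i => hr (f i)
  run_mem w r n hr := σ.run_mem _ _ n fun i => hy i ▸ hr (f i)
  wins w r hr := (σ.wins _ _ fun i => hy i ▸ hr (f i)).imp_right fun h i' => by
    obtain ⟨i, rfl⟩ := hf i'
    exact h i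

def plug {y : ι ⊕ κ → D.Q} (σ : TokenStrategy D p y)
    (τ : ∀ k, TokenStrategy D (y (.inr k)) fun _ : Empty => y (.inr k)) :
    TokenStrategy D p fun i => y (.inl i) where
  run w r := σ.run w (Sum.elim r fun k => (τ k).run w Empty.elim)
  run_zero w r := σ.run_zero _ _
  run_congr n w w' r r' hw hr := σ.run_congr n _ _ _ _ hw <| by
    rintro (i | k) m hm
    · exact hr i m hm
    · exact (τ k).run_congr m _ _ _ _ (fun l hl => hw l (hl.trans hm)) nofun
  run_mem w r n hr := σ.run_mem _ _ n <| by
    rintro (i | k)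
    · exact hr i
    · exact ((τ k).runUpTo_run (n := n) nofun).mono n.le_succ
  wins w r hr := by
    refine (σ.wins _ _ ?_).imp_right fun h i => h (.inl i)
    rintro (i | k)
    · exact hr i
    · exact (τ k).runOn_run nofun

end Operations

section SelfFeed

variable {D : NCW A} {S κ : Type} {p : D.Q} {y : S ⊕ κ → D.Q}

def selfFeedRun (σ : TokenStrategy D p y) (w : ℕ → A) (c : κ → ℕ → D.Q) : ℕ → D.Q
  | 0 => p
  | n + 1 => σ.run w
      (Sum.elim (fun _ m => if m ≤ n then σ.selfFeedRun w c m else p) c) (n + 1)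
  decreasing_by omega

variable (σ : TokenStrategy D p y) (w : ℕ → A) (c : κ → ℕ → D.Q)

@[simp]
theorem selfFeedRun_zero : σ.selfFeedRun w c 0 = p := by
  rw [selfFeedRun]

theorem selfFeedRun_eq (n : ℕ) :
    σ.selfFeedRun w c n = σ.run w (Sum.elim (fun _ => σ.selfFeedRun w c) c) n := by
  cases n with
  | zero => rw [σ.run_zero, selfFeedRun_zero]
  | succ n =>
    rw [selfFeedRun]
    refine σ.run_congr _ _ _ _ _ (fun _ _ => rfl) ?_
    rintro (s | k) m hm
    · simp [Nat.le_of_lt_succ hm]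
    · rfl

variable {σ w c}

theorem selfFeedRun_runUpTo (hy : ∀ s, y (.inl s) = p) {n : ℕ}
    (hc : ∀ k, D.RunUpTo (y (.inr k)) w (c k) n) :
    D.RunUpTo p w (σ.selfFeedRun w c) (n + 1) := by
  have hstep : ∀ n, D.RunUpTo p w (σ.selfFeedRun w c) n →
      (∀ k, D.RunUpTo (y (.inr k)) w (c k) n) →
      σ.selfFeedRun w c (n + 1) ∈ D.delta (σ.selfFeedRun w c n) (w n) := by
    intro n hself hc
    rw [σ.selfFeedRun_eq, σ.selfFeedRun_eq]
    refine σ.run_mem _ _ n ?_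
    rintro (s | k)
    · rw [hy s]
      exact hself
    · exact hc k
  induction n with
  | zero => exact RunUpTo.succ ⟨by simp, nofun⟩ (hstep 0 ⟨by simp, nofun⟩ hc)
  | succ n ih =>
    have h := ih fun k => (hc k).mono n.le_succ
    exact h.succ (hstep _ h hc)

theorem selfFeedRun_congr {w' : ℕ → A} {c' : κ → ℕ → D.Q} {n : ℕ}
    (hw : ∀ m < n, w m = w' m) (hc : ∀ k, ∀ m < n, c k m = c' k m) :
    σ.selfFeedRun w c n = σ.selfFeedRun w' c' n := by
  induction n using Nat.strong_induction_on with
  | _ n ih =>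
    rw [σ.selfFeedRun_eq, σ.selfFeedRun_eq]
    refine σ.run_congr n _ _ _ _ hw ?_
    rintro (s | k) m hm
    · exact ih m hm (fun l hl => hw l (hl.trans hm)) fun k l hl => hc k l (hl.trans hm)
    · exact hc k m hm

def selfFeed (σ : TokenStrategy D p y) (hy : ∀ s, y (.inl s) = p) :
    TokenStrategy D p fun k => y (.inr k) where
  run := σ.selfFeedRun
  run_zero := σ.selfFeedRun_zero
  run_congr _ _ _ _ _ := selfFeedRun_congr
  run_mem w c n hc := (selfFeedRun_runUpTo hy hc).2 n n.lt_succ_self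
  wins w c hc := by
    have hself : D.RunOn p w (σ.selfFeedRun w c) :=
      runOn_of_forall_runUpTo fun n =>
        (selfFeedRun_runUpTo hy fun k => (hc k).runUpTo n).mono n.le_succ
    have hfix : σ.run w (Sum.elim (fun _ => σ.selfFeedRun w c) c) = σ.selfFeedRun w c :=
      funext fun n => (σ.selfFeedRun_eq w c n).symm
    refine (σ.wins w _ ?_).imp (hfix ▸ ·) fun h k => h (.inr k)
    rintro (s | k)
    · exact (hy s).symm ▸ hself
    · exact hc k

end SelfFeed

variable {D : NCW A} {ι : Type} {p q : D.Q}

def sumEmpty (σ : TokenStrategy D p fun _ : ι => q) : TokenStrategy D p fun _ : ι ⊕ Empty => q :=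
  σ.comap Sum.inl (fun | .inl i => ⟨i, rfl⟩ | .inr e => e.elim) fun _ => rfl

def fourToken (σ : TokenStrategy D q fun _ : Bool => q) :
    TokenStrategy D q fun _ : Bool ⊕ Bool => q :=
  (σ.comp fun _ => σ).comap (Equiv.boolProdEquivSum Bool) (Equiv.surjective _) fun _ => rfl

end TokenStrategy

/-- Adam's token `b` in a configuration of the two-token game: `true` is the first one. -/
def adamToken {Q : Type} (c : Q × Q × Q) (b : Bool) : Q :=
  bif b then c.2.1 else c.2.2

abbrev G2Round (D : NCW A) : Type :=
  GameRound (D.Q × D.Q × D.Q) A D.Q (D.Q × D.Q) Unit Unit Unit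

abbrev G2Strategy (D : NCW A) : Type :=
  Game.EStrat (D.Q × D.Q × D.Q) A D.Q (D.Q × D.Q) Unit Unit Unit

section Realize

variable {D : NCW A} {p q₁ q₂ : D.Q} {ρ : ℕ → G2Round D}

theorem runUpTo_adamToken (hρ : Game.StateOk (D.G2From p q₁ q₂) ρ) {n : ℕ}
    (hleg : Game.Hleg (D.G2From p q₁ q₂) ρ n) (b : Bool) :
    D.RunUpTo (adamToken (p, q₁, q₂) b) (fun m => (ρ m).a1) (fun m => adamToken (ρ m).st b) n := by
  refine ⟨by simp only [hρ.1]; rfl, fun m hm => ?_⟩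
  have hmove := (hleg m hm).2.2.1
  simp only [hρ.2 m]
  cases b
  exacts [hmove.2, hmove.1]

def TokenStrategy.toG2Strategy (τ : TokenStrategy D p (adamToken (p, q₁, q₂))) : G2Strategy D where
  f1 L c a := τ.run (fun m => (L.map GameRound.a1).getD m a)
    (fun b m => adamToken ((L.map GameRound.st).getD m c) b) (L.length + 1)
  f2 _ _ _ _ _ := ()
  f3 _ _ _ _ _ _ _ := ()

variable (τ : TokenStrategy D p (adamToken (p, q₁, q₂)))

theorem TokenStrategy.toG2Strategy_run (hρ : Game.StateOk (D.G2From p q₁ q₂) ρ)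
    (hτ : Game.ConsE τ.toG2Strategy ρ) (n : ℕ) :
    (ρ n).st.1 = τ.run (fun m => (ρ m).a1) (fun b m => adamToken (ρ m).st b) n := by
  cases n with
  | zero => rw [τ.run_zero, hρ.1]; rfl
  | succ n =>
    rw [hρ.2 n]
    refine (hτ n).1.trans ?_
    simp only [TokenStrategy.toG2Strategy]
    rw [show (Game.hist ρ n).length = n by simp [Game.hist]]
    refine τ.run_congr _ _ _ _ _ ?_ ?_
    · intro m hm
      rcases Nat.lt_succ_iff_lt_or_eq.1 hm with hm | rfl
      · exact Game.getD_map_hist _ _ hm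
      · exact Game.getD_map_hist_self _ _ _
    · intro b m hm
      rcases Nat.lt_succ_iff_lt_or_eq.1 hm with hm | rfl
      · rw [Game.getD_map_hist _ _ hm]
      · rw [Game.getD_map_hist_self]

theorem TokenStrategy.toG2Strategy_winning :
    Game.EveWinningStrat (D.G2From p q₁ q₂) τ.toG2Strategy := by
  intro ρ hρ hτ
  have hrun := τ.toG2Strategy_run hρ hτ
  have heve : ∀ n, (ρ n).e1 = (ρ (n + 1)).st.1 := fun n => by rw [hρ.2 n]; rfl
  have hadam : ∀ n, (ρ n).a2 = (adamToken (ρ (n + 1)).st true, adamToken (ρ (n + 1)).st false) :=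
    fun n => by rw [hρ.2 n]; rfl
  refine ⟨fun n hleg _ => ?_, fun _ _ _ _ _ => trivial, fun _ _ _ _ _ _ _ => trivial,
    fun hlegal => ?_⟩
  · have := τ.run_mem _ _ n (runUpTo_adamToken hρ hleg)
    rwa [← hrun, ← hrun, ← heve] at this
  · have hruns b : D.RunOn (adamToken (p, q₁, q₂) b) (fun m => (ρ m).a1)
        (fun m => adamToken (ρ m).st b) :=
      runOn_of_forall_runUpTo fun n => runUpTo_adamToken hρ (fun m _ => hlegal m) b
    rcases τ.wins _ _ hruns with ⟨N, hN⟩ | hrej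
    · refine Or.inl ⟨N, fun n hn => ?_⟩
      simpa only [heve, hrun] using hN n hn
    · refine Or.inr ⟨fun ⟨N, hN⟩ => hrej true ⟨N, fun n hn => ?_⟩,
        fun ⟨N, hN⟩ => hrej false ⟨N, fun n hn => ?_⟩⟩
      all_goals
        have h := hN n hn
        rw [hadam] at h
        exact h

end Realize

section Extract

variable {D : NCW A} (σ : G2Strategy D) (p : D.Q) (w : ℕ → A) (r : Bool → ℕ → D.Q)

def g2Round (n : ℕ) (P : List (G2Round D) × D.Q) : G2Round D where
  st := (P.2, r true n, r false n)
  a1 := w n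
  e1 := σ.f1 P.1 (P.2, r true n, r false n) (w n)
  a2 := (r true (n + 1), r false (n + 1))
  e2 := ()
  a3 := ()
  e3 := ()

/-- The history of the first `n` rounds of the play of `σ` against `w` and `r`, and Eve's state
after them. -/
def g2Prefix : ℕ → List (G2Round D) × D.Q
  | 0 => ([], p)
  | n + 1 => ((g2Prefix n).1 ++ [g2Round σ w r n (g2Prefix n)], (g2Round σ w r n (g2Prefix n)).e1)

def g2Play (n : ℕ) : G2Round D :=
  g2Round σ w r n (g2Prefix σ p w r n)

theorem hist_g2Play (n : ℕ) : Game.hist (g2Play σ p w r) n = (g2Prefix σ p w r n).1 := by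
  induction n with
  | zero => rfl
  | succ n ih =>
    simp only [Game.hist, List.range_succ, List.map_append, List.map_singleton] at ih ⊢
    rw [ih]
    rfl

theorem consE_g2Play : Game.ConsE σ (g2Play σ p w r) := fun n =>
  ⟨by rw [hist_g2Play]; rfl, rfl, rfl⟩

variable {σ p w r} {q₁ q₂ : D.Q}

theorem stateOk_g2Play (hr : ∀ b, r b 0 = adamToken (p, q₁, q₂) b) :
    Game.StateOk (D.G2From p q₁ q₂) (g2Play σ p w r) :=
  ⟨by simp only [g2Play, g2Round, hr]; rfl, fun _ => rfl⟩

theorem g2Prefix_congr {w' : ℕ → A} {r' : Bool → ℕ → D.Q} {n : ℕ} (hw : ∀ m < n, w m = w' m)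
    (hr : ∀ b, ∀ m ≤ n, r b m = r' b m) : g2Prefix σ p w r n = g2Prefix σ p w' r' n := by
  induction n with
  | zero => rfl
  | succ n ih =>
    rw [g2Prefix, g2Prefix, ih (fun m hm => hw m (by omega)) fun b m hm => hr b m (by omega)]
    simp only [g2Round, hw n n.lt_succ_self, hr _ n n.le_succ, hr _ (n + 1) le_rfl]

theorem hleg_g2Play (hσ : Game.EveWinningStrat (D.G2From p q₁ q₂) σ) {n : ℕ}
    (hr : ∀ b, D.RunUpTo (adamToken (p, q₁, q₂) b) w (r b) n) :
    Game.Hleg (D.G2From p q₁ q₂) (g2Play σ p w r) n := by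
  have hplay := hσ _ (stateOk_g2Play fun b => (hr b).1) (consE_g2Play σ p w r)
  induction n with
  | zero => exact nofun
  | succ n ih =>
    have hleg := ih fun b => (hr b).mono n.le_succ
    refine Game.hleg_succ.2 ⟨hleg, trivial, hplay.1 n hleg trivial, ?_, trivial, trivial, trivial⟩
    exact ⟨(hr true).2 n n.lt_succ_self, (hr false).2 n n.lt_succ_self⟩

def toTokenStrategy (hσ : Game.EveWinningStrat (D.G2From p q₁ q₂) σ) :
    TokenStrategy D p (adamToken (p, q₁, q₂)) where
  run w r n := (g2Prefix σ p w r n).2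
  run_zero _ _ := rfl
  run_congr n w w' r r' hw hr := by
    cases n with
    | zero => rfl
    | succ n =>
      simp only [g2Prefix, g2Round]
      rw [g2Prefix_congr (fun m hm => hw m (by omega)) fun b m hm => hr b m (by omega),
        hw n n.lt_succ_self, hr true n n.lt_succ_self, hr false n n.lt_succ_self]
  run_mem w r n hr :=
    (hσ _ (stateOk_g2Play fun b => (hr b).1) (consE_g2Play σ p w r)).1 n (hleg_g2Play hσ hr) trivial
  wins w r hr := by
    have hwin := (hσ _ (stateOk_g2Play fun b => (hr b).1) (consE_g2Play σ p w r)).2.2.2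
      fun n => hleg_g2Play hσ (fun b => (hr b).runUpTo (n + 1)) n n.lt_succ_self
    rcases hwin with hacc | ⟨hrej₁, hrej₂⟩
    · exact Or.inl hacc
    · exact Or.inr (Bool.forall_bool.2 ⟨hrej₂, hrej₁⟩)

end Extract

section WinningRegion

open TokenStrategy

variable {D : NCW A}

theorem eveWins_G2From_iff {p q₁ q₂ : D.Q} :
    Game.EveWins (D.G2From p q₁ q₂) ↔ Nonempty (TokenStrategy D p (adamToken (p, q₁, q₂))) :=
  ⟨fun ⟨_, hσ⟩ => ⟨toTokenStrategy hσ⟩, fun ⟨τ⟩ => ⟨_, τ.toG2Strategy_winning⟩⟩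

theorem eveWins_G2From_self_iff {p q : D.Q} :
    Game.EveWins (D.G2From p q q) ↔ Nonempty (TokenStrategy D p fun _ : Bool => q) := by
  have hy : adamToken (p, q, q) = fun _ => q := funext fun b => Bool.cond_self b q
  rw [eveWins_G2From_iff, hy]

theorem eveWins_G2From_trans {p q r : D.Q} (hpq : Game.EveWins (D.G2From p q q))
    (hqr : Game.EveWins (D.G2From q r r)) : Game.EveWins (D.G2From p r r) := by
  obtain ⟨σ⟩ := eveWins_G2From_self_iff.1 hpq
  obtain ⟨τ⟩ := eveWins_G2From_self_iff.1 hqr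
  exact eveWins_G2From_self_iff.2
    ⟨(σ.comp fun _ => τ).comap Prod.fst Prod.fst_surjective fun _ => rfl⟩

theorem Immortal.of_eveWins {p q : D.Q} (hq : D.Immortal q)
    (hpq : Game.EveWins (D.G2From p q q)) : D.Immortal p := by
  obtain ⟨σ⟩ := eveWins_G2From_self_iff.1 hpq
  obtain ⟨τ⟩ := hq
  exact ⟨(σ.comp fun _ => τ).comap Prod.snd Prod.snd_surjective nofun⟩

theorem immortal_of_eveWins {q : D.Q} (h : Game.EveWins (D.G2From q q q)) : D.Immortal q := by
  obtain ⟨σ⟩ := eveWins_G2From_self_iff.1 h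
  exact ⟨σ.sumEmpty.selfFeed fun _ => rfl⟩

theorem immortal_of_chain [Fintype D.Q] (x : ℕ → D.Q)
    (hx : ∀ j, Game.EveWins (D.G2From (x (j + 1)) (x j) (x j))) :
    D.Immortal (x (Fintype.card D.Q)) := by
  have hchain : ∀ i j, i < j → Game.EveWins (D.G2From (x j) (x i) (x i)) := by
    intro i j hij
    induction j, hij using Nat.le_induction with
    | base => exact hx i
    | succ j _ ih => exact eveWins_G2From_trans (hx j) ih
  obtain ⟨i, j, hij, heq⟩ : ∃ i j, i < j ∧ j ≤ Fintype.card D.Q ∧ x i = x j := by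
    obtain ⟨i, j, hne, heq⟩ := Fintype.exists_ne_map_eq_of_card_lt
      (fun i : Fin (Fintype.card D.Q + 1) => x i) (by simp)
    rcases lt_or_gt_of_ne (Fin.val_ne_of_ne hne) with h | h
    · exact ⟨i, j, h, by omega, heq⟩
    · exact ⟨j, i, h, by omega, heq.symm⟩
  have hj : D.Immortal (x j) := immortal_of_eveWins (heq.2 ▸ hchain i j hij)
  rcases heq.1.lt_or_eq with hlt | rfl
  · exact hj.of_eveWins (hchain j _ hlt)
  · exact hj

/-- The strategy for the rest of the game beats two copies of Eve's own run once the other tokens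
are replaced by runs from the immortal states they occupy. -/
theorem eveWins_selfFeedRun {κ : Type} {p : D.Q} {y : Bool ⊕ κ → D.Q} (σ : TokenStrategy D p y)
    (hy : ∀ s, y (.inl s) = p) {w : ℕ → A} {c : κ → ℕ → D.Q}
    (hc : ∀ k, D.RunOn (y (.inr k)) w (c k)) (n : ℕ) (himm : ∀ k, D.Immortal (c k n)) :
    Game.EveWins (D.G2From (σ.selfFeedRun w c n) (σ.selfFeedRun w c n) (σ.selfFeedRun w c n)) := by
  have hR : ∀ i, D.RunUpTo (y i) w (Sum.elim (fun _ => σ.selfFeedRun w c) c i) n := by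
    rintro (s | k)
    · rw [hy s]
      exact (selfFeedRun_runUpTo hy fun k => (hc k).runUpTo n).mono n.le_succ
    · exact (hc k).runUpTo n
  have ψ := (σ.residual w _ n hR).plug fun k => (himm k).some
  rw [← σ.selfFeedRun_eq] at ψ
  exact eveWins_G2From_self_iff.2 ⟨ψ⟩

theorem exists_mem_delta_eveWins {q : D.Q} (hq : Game.EveWins (D.G2From q q q)) (a : A) :
    ∃ q' ∈ D.delta q a, Game.EveWins (D.G2From q' q' q') := by
  obtain ⟨σ⟩ := eveWins_G2From_self_iff.1 hq
  have hrun := selfFeedRun_runUpTo (σ := σ.sumEmpty) (w := fun _ => a) (c := Empty.elim)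
    (fun _ => rfl) (n := 0) nofun
  refine ⟨_, ?_, eveWins_selfFeedRun σ.sumEmpty (fun _ => rfl) (w := fun _ => a) (c := Empty.elim)
    nofun 1 nofun⟩
  simpa using hrun.2 0 one_pos

end WinningRegion

section Repair

variable {D : NCW A} (next : D.Q → A → D.Q) (q : D.Q)

open Classical in
noncomputable def repair (w : ℕ → A) (s : ℕ → D.Q) : ℕ → D.Q
  | 0 => q
  | n + 1 =>
    if s (n + 1) ∈ D.delta (repair w s n) (w n) then s (n + 1) else next (repair w s n) (w n)

variable {next q} {w : ℕ → A} {s : ℕ → D.Q}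

theorem runOn_repair (hnext : ∀ q a, next q a ∈ D.delta q a) : D.RunOn q w (repair next q w s) :=
  ⟨rfl, fun n => by
    simp only [repair]
    split_ifs with h
    exacts [h, hnext _ _]⟩

theorem repair_eq_self (hs : D.RunOn q w s) : repair next q w s = s := by
  funext n
  induction n with
  | zero => exact hs.1.symm
  | succ n ih => simp [repair, ih, hs.2 n]

theorem repair_congr {w' : ℕ → A} {s' : ℕ → D.Q} {n : ℕ} (hw : ∀ m < n, w m = w' m)
    (hs : ∀ m ≤ n, s m = s' m) : repair next q w s n = repair next q w' s' n := by
  induction n with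
  | zero => rfl
  | succ n ih =>
    rw [repair, repair, ih (fun m hm => hw m (by omega)) fun m hm => hs m (by omega),
      hw n n.lt_succ_self, hs (n + 1) le_rfl]

end Repair

section Iterate

variable {D : NCW A} {p : D.Q} (σ : TokenStrategy D p fun _ : Bool => p) (w : ℕ → A)
  (r : ℕ → D.Q)

def iterateRun : ℕ → ℕ → D.Q
  | 0 => r
  | k + 1 => σ.run w fun _ => iterateRun k

variable {σ w r}

theorem runOn_iterateRun (hr : D.RunOn p w r) (k : ℕ) : D.RunOn p w (iterateRun σ w r k) := by
  induction k with
  | zero => exact hr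
  | succ k ih => exact σ.runOn_run fun _ => ih

theorem accRun_iterateRun (hr : D.RunOn p w r) (hacc : D.AccRun w r) (k : ℕ) :
    D.AccRun w (iterateRun σ w r k) := by
  induction k with
  | zero => exact hacc
  | succ k ih => exact (σ.wins w _ fun _ => runOn_iterateRun hr k).resolve_right (· true ih)

theorem eveWins_iterateRun (hr : D.RunOn p w r) (k n : ℕ) :
    Game.EveWins (D.G2From (iterateRun σ w r (k + 1) n) (iterateRun σ w r k n)
      (iterateRun σ w r k n)) :=
  eveWins_G2From_self_iff.2 ⟨σ.residual w _ n fun _ => (runOn_iterateRun hr k).runUpTo n⟩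

end Iterate

abbrev LetterRound (D : NCW A) : Type := GameRound D.Q A D.Q Unit Unit Unit Unit

abbrev LetterStrategy (D : NCW A) : Type := Game.EStrat D.Q A D.Q Unit Unit Unit Unit

theorem hleg_letterGame {D : NCW A} {σ : LetterStrategy D}
    (hσ : Game.EveWinningStrat D.letterGame σ) {ρ : ℕ → LetterRound D}
    (hρ : Game.StateOk D.letterGame ρ) (hc : Game.ConsE σ ρ) (n : ℕ) :
    Game.Hleg D.letterGame ρ n := by
  induction n with
  | zero => exact nofun
  | succ n ih =>
    exact Game.hleg_succ.2 ⟨ih, trivial, (hσ ρ hρ hc).1 n ih trivial, trivial, trivial, trivial,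
      trivial⟩

section Restrict

open TokenStrategy

variable {C : NCW A} (h : Game.EveWins (C.G2From C.init C.init C.init))

theorem exists_mem_delta_restrict (x : (C.restrict h).Q) (a : A) :
    ∃ x', x' ∈ (C.restrict h).delta x a := by
  obtain ⟨q', hq', hw⟩ := exists_mem_delta_eveWins x.2 a
  exact ⟨⟨q', hw⟩, hq'⟩

noncomputable def restrictNext (x : (C.restrict h).Q) (a : A) : (C.restrict h).Q :=
  (exists_mem_delta_restrict h x a).choose

theorem runOn_val_repair (q : (C.restrict h).Q) (w : ℕ → A) (s : ℕ → (C.restrict h).Q) :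
    C.RunOn q.val w fun n => (repair (restrictNext h) q w s n).val :=
  have hs := runOn_repair (s := s) (w := w) fun x a => (exists_mem_delta_restrict h x a).choose_spec
  ⟨congrArg Subtype.val hs.1, hs.2⟩

/-- Adam's tokens need not move legally, so they are repaired into runs of the restriction before
being fed as carriers to `σ.fourToken`. -/
noncomputable def restrictStrategy (q : (C.restrict h).Q) :
    TokenStrategy (C.restrict h) q fun _ : Bool => q :=
  let σ := (eveWins_G2From_self_iff.1 q.2).some.fourToken
  { run w s n := ⟨σ.selfFeedRun w (fun b m => (repair (restrictNext h) q w (s b) m).val) n,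
      eveWins_selfFeedRun σ (fun _ => rfl) (fun b => runOn_val_repair h q w (s b)) n fun b =>
        immortal_of_eveWins (repair (restrictNext h) q w (s b) n).2⟩
    run_zero w s := Subtype.ext (σ.selfFeedRun_zero _ _)
    run_congr n w w' s s' hw hs := Subtype.ext <| selfFeedRun_congr hw fun b m hm =>
      congrArg Subtype.val <| repair_congr (fun l hl => hw l (hl.trans hm)) fun l hl =>
        hs b l (lt_of_le_of_lt hl hm)
    run_mem w s n _ := (selfFeedRun_runUpTo (fun _ => rfl) fun b =>
      (runOn_val_repair h q w (s b)).runUpTo n).2 n n.lt_succ_self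
    wins w s hs := by
      refine ((σ.selfFeed fun _ => rfl).wins w _ fun b => runOn_val_repair h q w (s b)).imp_right
        fun hrej b => ?_
      have hrej_b := hrej b
      rw [repair_eq_self (hs b)] at hrej_b
      exact hrej_b }

theorem eveWins_restrict_G2From (q : (C.restrict h).Q) :
    Game.EveWins ((C.restrict h).G2From q q q) :=
  eveWins_G2From_self_iff.2 ⟨restrictStrategy h q⟩

theorem lang_subset_lang_restrict [Finite C.Q] : C.Lang ⊆ (C.restrict h).Lang := by
  have := Fintype.ofFinite C.Q
  rintro w ⟨r, hr, hacc⟩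
  obtain ⟨σ⟩ := eveWins_G2From_self_iff.1 h
  set K := Fintype.card C.Q
  let τ := σ.fourToken.selfFeed fun _ => rfl
  have hrun := runOn_iterateRun (σ := τ) hr
  have hK n : Game.EveWins (C.G2From (iterateRun τ w r (K + 1) n) (iterateRun τ w r (K + 1) n)
      (iterateRun τ w r (K + 1) n)) :=
    eveWins_selfFeedRun σ.fourToken (fun _ => rfl) (fun _ => hrun K) n fun _ =>
      immortal_of_chain (fun k => iterateRun τ w r k n) fun k => eveWins_iterateRun hr k n
  exact ⟨fun n => ⟨_, hK n⟩, ⟨Subtype.ext (hrun _).1, (hrun _).2⟩, accRun_iterateRun hr hacc _⟩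

open Classical in
noncomputable def toRestrict (q : C.Q) : (C.restrict h).Q :=
  if hq : Game.EveWins (C.G2From q q q) then ⟨q, hq⟩ else (C.restrict h).init

theorem toRestrict_val (x : (C.restrict h).Q) : toRestrict h x.val = x :=
  dif_pos x.2

theorem val_toRestrict {q : C.Q} (hq : Game.EveWins (C.G2From q q q)) :
    (toRestrict h q).val = q :=
  congrArg Subtype.val (dif_pos hq)

noncomputable def restrictRound (g : LetterRound C) : LetterRound (C.restrict h) :=
  ⟨toRestrict h g.st, g.a1, toRestrict h g.e1, (), (), (), ()⟩

noncomputable def LetterStrategy.ofRestrict (σ : LetterStrategy (C.restrict h)) :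
    LetterStrategy C where
  f1 L q a := (σ.f1 (L.map (restrictRound h)) (toRestrict h q) a).val
  f2 _ _ _ _ _ := ()
  f3 _ _ _ _ _ _ _ := ()

section Transfer

variable {σ : LetterStrategy (C.restrict h)} {ρ : ℕ → LetterRound C}

theorem eveWins_e1_of_consE_ofRestrict (hc : Game.ConsE (LetterStrategy.ofRestrict h σ) ρ)
    (n : ℕ) :
    Game.EveWins (C.G2From (ρ n).e1 (ρ n).e1 (ρ n).e1) := by
  rw [(hc n).1]
  exact (σ.f1 _ _ _).2

theorem eveWins_st_of_consE_ofRestrict (hρ : Game.StateOk C.letterGame ρ)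
    (hc : Game.ConsE (LetterStrategy.ofRestrict h σ) ρ) (n : ℕ) :
    Game.EveWins (C.G2From (ρ n).st (ρ n).st (ρ n).st) := by
  cases n with
  | zero => exact hρ.1 ▸ h
  | succ n => exact (hρ.2 n).symm ▸ eveWins_e1_of_consE_ofRestrict h hc n

theorem stateOk_restrictRound (hρ : Game.StateOk C.letterGame ρ)
    (hc : Game.ConsE (LetterStrategy.ofRestrict h σ) ρ) :
    Game.StateOk (C.restrict h).letterGame fun n => restrictRound h (ρ n) :=
  ⟨Subtype.ext ((val_toRestrict h (eveWins_st_of_consE_ofRestrict h hρ hc 0)).trans hρ.1),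
    fun n => by simp only [restrictRound, hρ.2 n]; rfl⟩

theorem consE_restrictRound (hc : Game.ConsE (LetterStrategy.ofRestrict h σ) ρ) :
    Game.ConsE σ fun n => restrictRound h (ρ n) := fun n => by
  have hhist : Game.hist (fun n => restrictRound h (ρ n)) n =
      (Game.hist ρ n).map (restrictRound h) := by
    simp [Game.hist]
  refine ⟨?_, rfl, rfl⟩
  show toRestrict h (ρ n).e1 = _
  rw [hhist, (hc n).1]
  exact toRestrict_val h _

end Transfer

theorem gfg_of_gfg_restrict (hL : C.Lang ⊆ (C.restrict h).Lang) (hgfg : (C.restrict h).GFG) :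
    C.GFG := by
  obtain ⟨σ, hσ⟩ := hgfg
  refine ⟨LetterStrategy.ofRestrict h σ, fun ρ hρ hc => ?_⟩
  have hval n : (toRestrict h (ρ n).st).val = (ρ n).st ∧ (toRestrict h (ρ n).e1).val = (ρ n).e1 :=
    ⟨val_toRestrict h (eveWins_st_of_consE_ofRestrict h hρ hc n),
      val_toRestrict h (eveWins_e1_of_consE_ofRestrict h hc n)⟩
  have hρ' := stateOk_restrictRound h hρ hc
  have hc' := consE_restrictRound h hc
  have hlegal n : (ρ n).e1 ∈ C.delta (ρ n).st (ρ n).a1 := by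
    have := (hσ _ hρ' hc').1 n (hleg_letterGame hσ hρ' hc' n) trivial
    rwa [← (hval n).1, ← (hval n).2]
  refine ⟨fun n _ _ => hlegal n, fun _ _ _ _ _ => trivial, fun _ _ _ _ _ _ _ => trivial,
    fun _ => ?_⟩
  rcases (hσ _ hρ' hc').2.2.2 fun n => hleg_letterGame hσ hρ' hc' (n + 1) n n.lt_succ_self with
    hw | ⟨N, hN⟩
  · exact Or.inl fun hw' => hw (hL hw')
  · refine Or.inr ⟨N, fun n hn => ?_⟩
    have := hN n hn
    rwa [← (hval n).1, ← (hval n).2]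

end Restrict

end NCW

theorem G2_restriction_preserves_general
    (Alph : Type) (C : NCW Alph) [Finite C.Q]
    (h : Game.EveWins (C.G2From C.init C.init C.init)) :
    (∀ q' : (C.restrict h).Q,
        Game.EveWins ((C.restrict h).G2From q' q' q')) ∧
    ((C.restrict h).GFG → C.GFG) :=
  ⟨NCW.eveWins_restrict_G2From h, NCW.gfg_of_gfg_restrict h (NCW.lang_subset_lang_restrict h)⟩

theorem G2_restriction_preserves
    (Alph : Type) (C : NCW Alph) [Finite Alph] [Finite C.Q]
    (h : Game.EveWins (C.G2From C.init C.init C.init)) :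
    (∀ q' : (C.restrict h).Q,
        Game.EveWins ((C.restrict h).G2From q' q' q')) ∧
    ((C.restrict h).GFG → C.GFG) :=
  G2_restriction_preserves_general Alph C h
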